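/- arXiv:1812.01228 — 4 statements merged into one kernel-verified Lean document; each statement's English description precedes it below -/
import Mathlib

section
/- Let A be an m × n matrix with rational entries. Suppose that for every collection of columns of A (i.e., for every subset S of the column indices), the columns in S can be split into two disjoint parts S₁ and S₂ with S₁ ∪ S₂ = S such that the vector obtained as (sum of the columns in S₁) minus (sum of the columns in S₂) has all entries in {-1, 0, 1}. Then A is totally unimodular. -/
lemma ghouilaHouri_mem_iff (q : ℚ) : q ∈ ({-1, 0, 1} : Set ℚ) ↔ (q = -1 ∨ q = 0 ∨ q = 1) := by
  simp [Set.mem_insert_iff]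

open Matrix in
/-- Key lemma: entries of `A` are in `{-1,0,1}` under the Ghouila-Houri column condition. -/
lemma ghouilaHouri_aux_entry {m n : ℕ} (A : Matrix (Fin m) (Fin n) ℚ)
    (h : ∀ S : Finset (Fin n), ∃ S₁ S₂ : Finset (Fin n),
      Disjoint S₁ S₂ ∧ S₁ ∪ S₂ = S ∧
      ∀ i : Fin m, (∑ j ∈ S₁, A i j) - (∑ j ∈ S₂, A i j) ∈ ({-1, 0, 1} : Set ℚ)) :
    ∀ i j, A i j = -1 ∨ A i j = 0 ∨ A i j = 1 := by
  intro i j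
  obtain ⟨S₁, S₂, hdisj, hunion, hsum⟩ := h {j}
  have h1 : S₁ ⊆ {j} := hunion ▸ Finset.subset_union_left
  have h2 : S₂ ⊆ {j} := hunion ▸ Finset.subset_union_right
  have hs := (ghouilaHouri_mem_iff _).mp (hsum i)
  rcases Finset.subset_singleton_iff.mp h1 with e1 | e1 <;>
    rcases Finset.subset_singleton_iff.mp h2 with e2 | e2 <;> subst e1 <;> subst e2
  · exact absurd hunion.symm (Finset.singleton_ne_empty j)
  · simp only [Finset.sum_empty, Finset.sum_singleton, zero_sub] at hs
    rcases hs with h' | h' | h'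
    · right; right; linarith
    · right; left; linarith
    · left; linarith
  · simp only [Finset.sum_singleton, Finset.sum_empty, sub_zero] at hs
    exact hs
  · exfalso
    exact (Finset.disjoint_left.mp hdisj (Finset.mem_singleton_self j))
      (Finset.mem_singleton_self j)

open Matrix in
lemma ghouilaHouri_aux {m n : ℕ} (A : Matrix (Fin m) (Fin n) ℚ)
    (h : ∀ S : Finset (Fin n), ∃ S₁ S₂ : Finset (Fin n),
      Disjoint S₁ S₂ ∧ S₁ ∪ S₂ = S ∧
      ∀ i : Fin m, (∑ j ∈ S₁, A i j) - (∑ j ∈ S₂, A i j) ∈ ({-1, 0, 1} : Set ℚ)) :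
    ∀ k : ℕ, ∀ f : Fin k → Fin m, ∀ g : Fin k → Fin n, Function.Injective f →
      Function.Injective g →
      (A.submatrix f g).det = -1 ∨ (A.submatrix f g).det = 0 ∨ (A.submatrix f g).det = 1 := by
  intro k
  induction k with
  | zero => intro f g _ _; right; right; simp [Matrix.det_fin_zero]
  | succ k ih =>
    intro f g hf hg
    set B := A.submatrix f g with hB
    by_cases hdet : B.det = 0
    · right; left; exact hdet
    -- the Cramer vector b with B *ᵥ b = det B • e₀
    set b : Fin (k + 1) → ℚ := Matrix.cramer B (Pi.single 0 1 : Fin (k + 1) → ℚ) with hbdef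
    have hBb : B *ᵥ b = B.det • ((Pi.single 0 1 : Fin (k + 1) → ℚ)) :=
      Matrix.mulVec_cramer B _
    have hmv : ∀ (v : Fin (k + 1) → ℚ) (r : Fin (k + 1)), (B *ᵥ v) r = ∑ t, B r t * v t :=
      fun v r => rfl
    have hb_mem : ∀ t, b t = -1 ∨ b t = 0 ∨ b t = 1 := by
      intro t
      rw [hbdef, Matrix.cramer_apply, Matrix.det_succ_column _ t]
      rw [Finset.sum_eq_single (0 : Fin (k + 1))]
      · have hminor : (B.updateCol t (Pi.single 0 1)).submatrix
            (Fin.succAbove 0) (Fin.succAbove t)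
            = A.submatrix (f ∘ Fin.succAbove 0) (g ∘ Fin.succAbove t) := by
          ext a c
          simp [Matrix.updateCol_apply, Fin.succAbove_ne t c, hB]
        rw [hminor]
        have hd := ih (f ∘ Fin.succAbove 0) (g ∘ Fin.succAbove t)
          (hf.comp (Fin.succAbove_right_injective))
          (hg.comp (Fin.succAbove_right_injective))
        have hupd : B.updateCol t (Pi.single 0 1) 0 t = 1 := by
          simp [Matrix.updateCol_apply]
        rw [hupd]
        rcases Nat.even_or_odd ((0 : Fin (k + 1)) + t : ℕ) with he | he
        · rw [he.neg_one_pow]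
          rcases hd with h' | h' | h' <;> rw [h'] <;> norm_num
        · rw [he.neg_one_pow]
          rcases hd with h' | h' | h' <;> rw [h'] <;> norm_num
      · intro s _ hs
        have : B.updateCol t (Pi.single 0 1) s t = 0 := by
          simp [Matrix.updateCol_apply, Pi.single_apply, hs]
        rw [this]; ring
      · intro habs; exact absurd (Finset.mem_univ _) habs
    -- b is nonzero somewhere
    have hbne : ∃ t₀, b t₀ ≠ 0 := by
      by_contra hc
      push_neg at hc
      have hb0 : b = 0 := funext hc
      have h0 := congrFun hBb 0
      rw [hb0, Matrix.mulVec_zero] at h0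
      simp [Pi.single_eq_same] at h0
      exact hdet h0.symm
    obtain ⟨t₀, ht₀⟩ := hbne
    -- the set S of columns with nonzero coefficient
    classical
    set S : Finset (Fin n) := (Finset.univ.filter (fun t => b t ≠ 0)).image g with hSdef
    obtain ⟨S₁, S₂, hdisj, hunion, hsum⟩ := h S
    have hS₁ : S₁ ⊆ S := hunion ▸ Finset.subset_union_left
    have hS₂ : S₂ ⊆ S := hunion ▸ Finset.subset_union_right
    -- the sign vector x
    set x : Fin (k + 1) → ℚ :=
      fun t => if g t ∈ S₁ then 1 else if g t ∈ S₂ then -1 else 0 with hxdef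
    -- membership in S transfers
    have hgmemS : ∀ t : Fin (k + 1), g t ∈ S ↔ b t ≠ 0 := by
      intro t
      constructor
      · intro hmem
        rw [hSdef, Finset.mem_image] at hmem
        obtain ⟨t', ht', he⟩ := hmem
        rw [Finset.mem_filter] at ht'
        rw [← hg he]
        exact ht'.2
      · intro hne
        rw [hSdef, Finset.mem_image]
        exact ⟨t, Finset.mem_filter.mpr ⟨Finset.mem_univ _, hne⟩, rfl⟩
    have hxcases : ∀ t : Fin (k + 1), b t ≠ 0 → x t = 1 ∨ x t = -1 := by
      intro t hbt
      have hgt : g t ∈ S₁ ∪ S₂ := hunion ▸ (hgmemS t).mpr hbt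
      rw [Finset.mem_union] at hgt
      rw [hxdef]
      rcases hgt with h1 | h2
      · left; simp [h1]
      · by_cases h1 : g t ∈ S₁
        · left; simp [h1]
        · right; simp [h1, h2]
    -- computing B *ᵥ x
    have hmul : ∀ r, (B *ᵥ x) r = (∑ j ∈ S₁, A (f r) j) - (∑ j ∈ S₂, A (f r) j) := by
      intro r
      have hinj1 : Set.InjOn g (g ⁻¹' S₁) := Function.Injective.injOn hg
      have hinj2 : Set.InjOn g (g ⁻¹' S₂) := Function.Injective.injOn hg
      have hrange : ∀ (T : Finset (Fin n)), T ⊆ S →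
          ∀ j ∈ T, j ∉ Set.range g → A (f r) j = 0 := by
        intro T hT j hj hr
        exfalso
        have hjS := hT hj
        rw [hSdef, Finset.mem_image] at hjS
        obtain ⟨t', _, he⟩ := hjS
        exact hr ⟨t', he⟩
      have e1 : ∑ t ∈ S₁.preimage g hinj1, A (f r) (g t) = ∑ j ∈ S₁, A (f r) j :=
        Finset.sum_preimage g S₁ hinj1 _ (hrange S₁ hS₁)
      have e2 : ∑ t ∈ S₂.preimage g hinj2, A (f r) (g t) = ∑ j ∈ S₂, A (f r) j :=
        Finset.sum_preimage g S₂ hinj2 _ (hrange S₂ hS₂)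
      rw [← e1, ← e2, hmv]
      have step : ∀ t : Fin (k + 1), B r t * x t =
          (if t ∈ S₁.preimage g hinj1 then A (f r) (g t) else 0)
          - (if t ∈ S₂.preimage g hinj2 then A (f r) (g t) else 0) := by
        intro t
        by_cases h1 : g t ∈ S₁
        · have h2 : g t ∉ S₂ := fun hc => (Finset.disjoint_left.mp hdisj h1) hc
          simp [hxdef, hB, Finset.mem_preimage, h1, h2]
        · by_cases h2 : g t ∈ S₂
          · simp [hxdef, hB, Finset.mem_preimage, h1, h2]
          · simp [hxdef, Finset.mem_preimage, h1, h2]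
      rw [Finset.sum_congr rfl (fun t _ => step t), Finset.sum_sub_distrib,
        Finset.sum_ite_mem, Finset.sum_ite_mem, Finset.univ_inter, Finset.univ_inter]
    have hc_mem : ∀ r, (B *ᵥ x) r = -1 ∨ (B *ᵥ x) r = 0 ∨ (B *ᵥ x) r = 1 := by
      intro r
      rw [hmul r]
      exact (ghouilaHouri_mem_iff _).mp (hsum (f r))
    -- parity
    have hpar : ∀ r, ∃ z : ℤ, (B *ᵥ x) r - (B *ᵥ b) r = 2 * z := by
      intro r
      have hterm : ∀ t : Fin (k + 1), ∃ z : ℤ, B r t * (x t - b t) = 2 * z := by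
        intro t
        by_cases hbt : b t = 0
        · have hgt : g t ∉ S := fun hc => ((hgmemS t).mp hc) hbt
          have hx : x t = 0 := by
            have h1 : g t ∉ S₁ := fun hc => hgt (hS₁ hc)
            have h2 : g t ∉ S₂ := fun hc => hgt (hS₂ hc)
            rw [hxdef]
            simp [h1, h2]
          exact ⟨0, by rw [hx, hbt]; ring⟩
        · have hx : x t = 1 ∨ x t = -1 := hxcases t hbt
          have hbt' : b t = 1 ∨ b t = -1 := by
            rcases hb_mem t with h' | h' | h'
            · right; exact h'
            · exact absurd h' hbt
            · left; exact h'
          have hBrt : B r t = -1 ∨ B r t = 0 ∨ B r t = 1 :=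
            ghouilaHouri_aux_entry A h (f r) (g t)
          have htri : B r t * (x t - b t) = -2 ∨ B r t * (x t - b t) = 0
              ∨ B r t * (x t - b t) = 2 := by
            rcases hx with hx | hx <;> rcases hbt' with hb' | hb' <;>
              rcases hBrt with hB' | hB' | hB' <;> rw [hx, hb', hB'] <;> norm_num
          rcases htri with h' | h' | h'
          · exact ⟨-1, by rw [h']; norm_num⟩
          · exact ⟨0, by rw [h']; norm_num⟩
          · exact ⟨1, by rw [h']; norm_num⟩
      choose z hz using hterm
      refine ⟨∑ t, z t, ?_⟩
      rw [hmv, hmv, ← Finset.sum_sub_distrib]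
      rw [Finset.sum_congr rfl (fun t _ => by rw [← mul_sub, hz t])]
      push_cast
      rw [Finset.mul_sum]
    -- rows other than 0 vanish
    have hzero : ∀ r : Fin (k + 1), r ≠ 0 → (B *ᵥ x) r = 0 := by
      intro r hr
      have hBbr : (B *ᵥ b) r = 0 := by
        rw [hBb]
        simp [Pi.single_apply, hr]
      obtain ⟨z, hz⟩ := hpar r
      rw [hBbr, sub_zero] at hz
      rcases hc_mem r with h' | h' | h'
      · exfalso
        rw [h'] at hz
        have : (2 * z : ℤ) = -1 := by exact_mod_cast hz.symm
        omega
      · exact h'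
      · exfalso
        rw [h'] at hz
        have : (2 * z : ℤ) = 1 := by exact_mod_cast hz.symm
        omega
    -- x is ±1 at t₀
    have hxt₀ : x t₀ = 1 ∨ x t₀ = -1 := hxcases t₀ ht₀
    -- B *ᵥ x is c₀ • e₀ with c₀ = ±1
    obtain ⟨c0, hc0pm, hxval⟩ : ∃ c0 : ℚ, (c0 = 1 ∨ c0 = -1) ∧
        B *ᵥ x = c0 • ((Pi.single 0 1 : Fin (k + 1) → ℚ)) := by
      have hgen : B *ᵥ x = ((B *ᵥ x) 0) • ((Pi.single 0 1 : Fin (k + 1) → ℚ)) := by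
        funext r
        by_cases hr : r = 0
        · subst hr; simp
        · rw [hzero r hr]
          simp [Pi.single_apply, hr]
      rcases hc_mem 0 with h' | h' | h'
      · exact ⟨-1, Or.inr rfl, by rw [hgen, h']⟩
      · exfalso
        rw [h', zero_smul] at hgen
        have hx0 : x = 0 := Matrix.eq_zero_of_mulVec_eq_zero hdet hgen
        rcases hxt₀ with h'' | h'' <;> rw [hx0] at h'' <;> simp at h''
      · exact ⟨1, Or.inl rfl, by rw [hgen, h']⟩
    -- solve for det
    have hkey : B *ᵥ (c0 • b - B.det • x) = 0 := by
      rw [Matrix.mulVec_sub, Matrix.mulVec_smul, Matrix.mulVec_smul, hBb, hxval,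
        smul_smul, smul_smul, mul_comm]
      exact sub_self _
    have hvec : c0 • b - B.det • x = 0 :=
      Matrix.eq_zero_of_mulVec_eq_zero hdet hkey
    have ht : c0 * b t₀ = B.det * x t₀ := by
      have hco := congrFun hvec t₀
      simp only [Pi.sub_apply, Pi.smul_apply, smul_eq_mul, Pi.zero_apply] at hco
      linarith
    have hbt₀ : b t₀ = 1 ∨ b t₀ = -1 := by
      rcases hb_mem t₀ with h' | h' | h'
      · right; exact h'
      · exact absurd h' ht₀
      · left; exact h'
    rcases hc0pm with h1 | h1 <;> rcases hbt₀ with h2 | h2 <;> rcases hxt₀ with h3 | h3 <;>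
      rw [h1, h2, h3] at ht <;>
      first
        | (right; right; show B.det = 1; linarith)
        | (left; show B.det = -1; linarith)

/-- Ghouila-Houri characterization, direction (iii) ⇒ (i): if every collection of columns of `A`
can be split into two parts such that the sum of the columns in one part minus the sum of the
columns in the other part is a vector with entries in `{-1, 0, 1}`, then `A` is totally
unimodular. -/
theorem ghouilaHouri_split_imp_isTotallyUnimodular {m n : ℕ} (A : Matrix (Fin m) (Fin n) ℚ)
    (h : ∀ S : Finset (Fin n), ∃ S₁ S₂ : Finset (Fin n),
      Disjoint S₁ S₂ ∧ S₁ ∪ S₂ = S ∧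
      ∀ i : Fin m, (∑ j ∈ S₁, A i j) - (∑ j ∈ S₂, A i j) ∈ ({-1, 0, 1} : Set ℚ)) :
    A.IsTotallyUnimodular := by
  intro k f g hf hg
  rcases ghouilaHouri_aux A h k f g hf hg with h' | h' | h'
  · exact ⟨-1, by rw [h']; simp⟩
  · exact ⟨0, by rw [h']; simp⟩
  · exact ⟨1, by rw [h']; simp⟩
end

section
/- Let A be an m × n totally unimodular matrix with rational entries. Then for every collection of columns of A (i.e., for every subset S of the column indices), the columns in S can be split into two disjoint parts S₁ and S₂ with S₁ ∪ S₂ = S such that the vector obtained as (sum of the columns in S₁) minus (sum of the columns in S₂) has all entries in {-1, 0, 1}. -/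
/-!
Let `b = A χ_S`. The point `χ_S / 2` satisfies `0 ≤ x ≤ χ_S` and `⌊b / 2⌋ ≤ A x ≤ ⌈b / 2⌉`, a
system whose matrix `(A; -A; I; -I)` is again totally unimodular. Such a system, once feasible,
has an integral solution: move a feasible point along directions orthogonal to its active rows
until these span, and then solve a square subsystem by Cramer's rule, whose determinant is `±1`.
An integral solution is `χ_T` for some `T ⊆ S` with `|b - 2 A χ_T| ≤ 1`; take `S₁ = S \ T` and
`S₂ = T`.
-/

open Matrix Submodule Set

namespace Matrix

theorem det_map_intCast {κ K : Type*} [Fintype κ] [DecidableEq κ] [CommRing K]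
    (B : Matrix κ κ ℤ) : (B.map ((↑) : ℤ → K)).det = B.det := by
  simpa using ((Int.castRingHom K).map_det B).symm

section TotallyUnimodular

variable {m n R : Type*} [CommRing R]

theorem IsTotallyUnimodular.fromRows_neg_self {A : Matrix m n R} (hA : A.IsTotallyUnimodular) :
    (fromRows A (-A)).IsTotallyUnimodular := by
  rw [isTotallyUnimodular_iff] at hA ⊢
  intro k f g
  -- each row of a submatrix is `±` a row of `A`
  have hfactor : (fromRows A (-A)).submatrix f g =
      of fun p q => Sum.elim (fun _ => (1 : R)) (fun _ => -1) (f p) *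
        A.submatrix (fun p => Sum.elim id id (f p)) g p q := by
    ext p q
    cases hp : f p <;> simp [hp]
  rw [hfactor, det_mul_column]
  change _ ∈ MonoidHom.mrange SignType.castHom.toMonoidHom
  refine mul_mem (prod_mem fun p _ => ?_) (hA k _ g)
  cases f p
  · exact ⟨1, by simp⟩
  · exact ⟨-1, by simp⟩

theorem IsTotallyUnimodular.exists_map_intCast_eq [CharZero R] {A : Matrix m n R}
    (hA : A.IsTotallyUnimodular) :
    ∃ B : Matrix m n ℤ, B.IsTotallyUnimodular ∧ B.map (↑) = A := by
  choose s hs using hA.apply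
  have hmap : (of fun i j => (s i j : ℤ)).map ((↑) : ℤ → R) = A := by
    ext i j
    simp [hs]
  refine ⟨of fun i j => (s i j : ℤ), fun k f g hf hg => ?_, hmap⟩
  obtain ⟨t, ht⟩ := hA k f g hf hg
  refine ⟨t, Int.cast_injective (α := R) ?_⟩
  rw [SignType.intCast_cast, ht, ← hmap, submatrix_map, det_map_intCast]

theorem IsTotallyUnimodular.isUnit_det {κ : Type*} [Fintype κ] [DecidableEq κ] {B : Matrix κ κ ℤ}
    (hB : B.IsTotallyUnimodular) (h : B.det ≠ 0) : IsUnit B.det := by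
  obtain ⟨s, hs⟩ := (isTotallyUnimodular_iff_fintype B).mp hB κ id id
  rw [submatrix_id_id] at hs
  cases s <;> simp_all [← hs]

end TotallyUnimodular

theorem mulVec_ite_mem {ι κ R : Type*} [Fintype κ] [DecidableEq κ] [Semiring R]
    (A : Matrix ι κ R) (T : Finset κ) (i : ι) :
    (A *ᵥ fun j => if j ∈ T then 1 else 0) i = ∑ j ∈ T, A i j := by
  simp [mulVec_apply, dotProduct, Finset.sum_ite_mem]

theorem span_range_row_fromRows_one {ι κ R : Type*} [Fintype κ] [DecidableEq κ] [Semiring R]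
    (A : Matrix ι κ R) : span R (range (fromRows A (1 : Matrix κ κ R)).row) = ⊤ := by
  refine eq_top_mono (span_mono ?_) (Pi.basisFun R κ).span_eq
  rintro _ ⟨j, rfl⟩
  exact ⟨Sum.inr j, by ext; simp [one_apply, Pi.single_apply, eq_comm]⟩

theorem map_intCast_mulVec {ι κ K : Type*} [Fintype κ] [Ring K] (B : Matrix ι κ ℤ) (z : κ → ℤ) :
    B.map (↑) *ᵥ ((↑) ∘ z) = ((↑) ∘ (B *ᵥ z) : ι → K) := by
  ext i
  simpa using (RingHom.map_mulVec (Int.castRingHom K) B z i).symm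

theorem intCast_comp_inv_mulVec_eq {κ K : Type*} [Fintype κ] [DecidableEq κ] [Field K]
    {B : Matrix κ κ ℤ} (hB : IsUnit B.det) {c : κ → ℤ} {x : κ → K}
    (hx : B.map (↑) *ᵥ x = (↑) ∘ c) :
    (↑) ∘ (B⁻¹ *ᵥ c) = x := by
  have hunit : IsUnit (B.map ((↑) : ℤ → K)) := by
    rw [isUnit_iff_isUnit_det, det_map_intCast]
    exact hB.map (Int.castRingHom K)
  apply mulVec_injective_iff_isUnit.mpr hunit
  rw [hx, map_intCast_mulVec, mulVec_mulVec, mul_nonsing_inv B hB, one_mulVec]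

theorem span_eq_top_iff_forall_dotProduct_eq_zero {κ K : Type*} [Fintype κ] [DecidableEq κ]
    [Field K] (s : Set (κ → K)) :
    span K s = ⊤ ↔ ∀ y : κ → K, (∀ v ∈ s, v ⬝ᵥ y = 0) → y = 0 := by
  rw [← dualAnnihilator_eq_bot_iff, Submodule.eq_bot_iff,
    ← (dotProductEquiv K κ).toEquiv.forall_congr_right]
  simp only [mem_dualAnnihilator, ← LinearMap.mem_ker, ← SetLike.le_def, span_le]
  simp [Set.subset_def, dotProduct_comm]

section Polyhedron

variable {ι κ K : Type*} [Fintype ι] [Fintype κ] [Field K] [LinearOrder K]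

def activeRows (M : Matrix ι κ K) (c : ι → K) (x : κ → K) : Finset ι :=
  {i | (M *ᵥ x) i = c i}

variable {M : Matrix ι κ K} {c : ι → K}

theorem mem_activeRows {x : κ → K} {i : ι} : i ∈ activeRows M c x ↔ (M *ᵥ x) i = c i := by
  simp [activeRows]

variable [IsStrictOrderedRing K]

theorem exists_activeRows_ssubset_of_mulVec_pos {x y : κ → K} (hx : M *ᵥ x ≤ c)
    (hy : ∀ i ∈ activeRows M c x, (M *ᵥ y) i = 0) (hpos : ∃ i, 0 < (M *ᵥ y) i) :
    ∃ x', M *ᵥ x' ≤ c ∧ activeRows M c x ⊂ activeRows M c x' := by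
  classical
  obtain ⟨i₀, hi₀, hmin⟩ := Finset.exists_min_image {i | 0 < (M *ᵥ y) i}
    (fun i => (c i - (M *ᵥ x) i) / (M *ᵥ y) i) (by simpa [Finset.Nonempty] using hpos)
  simp only [Finset.mem_filter, Finset.mem_univ, true_and] at hi₀ hmin
  -- ratio test: the largest step along `y` that keeps `x + t • y` feasible makes row `i₀` active
  set t := (c i₀ - (M *ᵥ x) i₀) / (M *ᵥ y) i₀
  have ht : 0 ≤ t := div_nonneg (sub_nonneg.mpr (hx i₀)) hi₀.le
  have hMx' : ∀ i, (M *ᵥ (x + t • y)) i = (M *ᵥ x) i + t * (M *ᵥ y) i := by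
    simp [mulVec_add, mulVec_smul]
  refine ⟨x + t • y, fun i => ?_, ?_⟩
  · rw [hMx']
    rcases le_or_gt ((M *ᵥ y) i) 0 with h | h
    · nlinarith [hx i]
    · have := (le_div_iff₀ h).mp (hmin i h)
      linarith
  · rw [Finset.ssubset_iff_of_subset fun i hi => ?_]
    · refine ⟨i₀, ?_, fun h => hi₀.ne' (hy i₀ h)⟩
      rw [mem_activeRows, hMx', div_mul_cancel₀ _ hi₀.ne']
      ring
    · rw [mem_activeRows] at hi ⊢
      rw [hMx', hy i (mem_activeRows.mpr hi), hi, mul_zero, add_zero]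

theorem exists_activeRows_ssubset (hM : span K (range M.row) = ⊤) {x : κ → K}
    (hx : M *ᵥ x ≤ c) (hact : span K (M.row '' activeRows M c x) ≠ ⊤) :
    ∃ x', M *ᵥ x' ≤ c ∧ activeRows M c x ⊂ activeRows M c x' := by
  classical
  obtain ⟨y, hy, hy0⟩ : ∃ y, (∀ i ∈ activeRows M c x, (M *ᵥ y) i = 0) ∧ y ≠ 0 := by
    simpa [span_eq_top_iff_forall_dotProduct_eq_zero, mulVec_apply] using hact
  obtain ⟨i, hi⟩ : ∃ i, (M *ᵥ y) i ≠ 0 := by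
    by_contra! h
    exact hy0 ((span_eq_top_iff_forall_dotProduct_eq_zero _).mp hM y
      (by simpa [mulVec_apply] using h))
  rcases hi.lt_or_gt with hneg | hpos
  · refine exists_activeRows_ssubset_of_mulVec_pos hx (y := -y) ?_ ⟨i, ?_⟩ <;>
      simp_all [mulVec_neg]
  · exact exists_activeRows_ssubset_of_mulVec_pos hx hy ⟨i, hpos⟩

theorem exists_span_activeRows_eq_top (hM : span K (range M.row) = ⊤) {x : κ → K}
    (hx : M *ᵥ x ≤ c) : ∃ x', M *ᵥ x' ≤ c ∧ span K (M.row '' activeRows M c x') = ⊤ := by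
  classical
  induction hn : (activeRows M c x)ᶜ.card using Nat.strong_induction_on generalizing x with
  | _ n ih =>
    by_cases hact : span K (M.row '' activeRows M c x) = ⊤
    · exact ⟨x, hx, hact⟩
    · obtain ⟨x', hx', hss⟩ := exists_activeRows_ssubset hM hx hact
      exact ih _ (hn ▸ Finset.card_lt_card (Finset.compl_ssubset_compl.mpr hss)) hx' rfl

end Polyhedron

section IntegerPoints

variable {ι κ K : Type*} [Fintype κ] [DecidableEq κ] {B : Matrix ι κ ℤ}

theorem IsTotallyUnimodular.exists_intCast_comp_eq_of_span [Field K]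
    (hB : B.IsTotallyUnimodular) {R : Set ι} (hR : span K ((B.map ((↑) : ℤ → K)).row '' R) = ⊤)
    {c : ι → ℤ} {x : κ → K} (hx : ∀ i ∈ R, (B.map (↑) *ᵥ x) i = c i) :
    ∃ z : κ → ℤ, ((↑) ∘ z : κ → K) = x := by
  obtain ⟨κ', a, -, hspan, hli⟩ :=
    exists_linearIndependent' K fun i : R => (B.map ((↑) : ℤ → K)).row i
  rw [← image_eq_range, hR] at hspan
  -- the active rows contain a basis, indexed by `κ` through `f`: a nonsingular square subsystem
  let e : κ ≃ κ' := (Pi.basisFun K κ).indexEquiv (Module.Basis.mk hli hspan.ge)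
  let f : κ → ι := fun j => a (e j)
  have hdet : (B.submatrix f id).det ≠ 0 := by
    have hunit : IsUnit ((B.submatrix f id).map ((↑) : ℤ → K)) :=
      linearIndependent_rows_iff_isUnit.mp (hli.comp e e.injective)
    rw [isUnit_iff_isUnit_det] at hunit
    intro h0
    simp [det_map_intCast, h0] at hunit
  exact ⟨_, intCast_comp_inv_mulVec_eq ((hB.submatrix f id).isUnit_det hdet)
    (c := c ∘ f) (funext fun j => hx _ (a (e j)).2)⟩

variable [Fintype ι] [Field K] [LinearOrder K] [IsStrictOrderedRing K]

theorem IsTotallyUnimodular.exists_mulVec_le (hB : B.IsTotallyUnimodular)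
    (hspan : span K (range (B.map ((↑) : ℤ → K)).row) = ⊤) {c : ι → ℤ} {x : κ → K}
    (hx : B.map (↑) *ᵥ x ≤ (↑) ∘ c) : ∃ z : κ → ℤ, B *ᵥ z ≤ c := by
  obtain ⟨x', hx', hvert⟩ := exists_span_activeRows_eq_top hspan hx
  obtain ⟨z, rfl⟩ := hB.exists_intCast_comp_eq_of_span hvert fun i hi => mem_activeRows.mp hi
  refine ⟨z, fun i => ?_⟩
  have := hx' i
  rw [map_intCast_mulVec] at this
  exact Int.cast_le.mp this

theorem IsTotallyUnimodular.exists_mulVec_mem_Icc (hB : B.IsTotallyUnimodular)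
    (hspan : span K (range (B.map ((↑) : ℤ → K)).row) = ⊤) {l u : ι → ℤ} {x : κ → K}
    (hl : (↑) ∘ l ≤ B.map (↑) *ᵥ x) (hu : B.map (↑) *ᵥ x ≤ (↑) ∘ u) :
    ∃ z : κ → ℤ, l ≤ B *ᵥ z ∧ B *ᵥ z ≤ u := by
  have hspan' : span K (range ((fromRows B (-B)).map ((↑) : ℤ → K)).row) = ⊤ := by
    refine eq_top_mono (span_mono ?_) hspan
    rintro _ ⟨i, rfl⟩
    exact ⟨Sum.inl i, rfl⟩
  obtain ⟨z, hz⟩ := hB.fromRows_neg_self.exists_mulVec_le hspan' (c := Sum.elim u (-l)) (x := x)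
    (by
      rw [fromRows_map, fromRows_mulVec]
      rintro (i | i)
      · exact hu i
      · rw [Matrix.map_neg _ Int.cast_neg, neg_mulVec]
        simpa using neg_le_neg (hl i))
  rw [fromRows_mulVec] at hz
  exact ⟨z, fun i => by simpa [neg_mulVec] using hz (Sum.inr i), fun i => hz (Sum.inl i)⟩

theorem IsTotallyUnimodular.exists_mulVec_near_half (hB : B.IsTotallyUnimodular) {v : κ → ℤ}
    (hv : 0 ≤ v) :
    ∃ z : κ → ℤ, 0 ≤ z ∧ z ≤ v ∧
      ∀ i, (B *ᵥ v) i / 2 ≤ (B *ᵥ z) i ∧ (B *ᵥ z) i ≤ ((B *ᵥ v) i + 1) / 2 := by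
  -- `x = v / 2` satisfies the rational relaxation of these bounds
  set x : κ → ℚ := (1 / 2 : ℚ) • ((↑) ∘ v)
  have hBx : ∀ i, (B.map (↑) *ᵥ x) i = ((B *ᵥ v) i : ℚ) / 2 := fun i => by
    simp [x, mulVec_smul, map_intCast_mulVec, div_eq_inv_mul]
  have hspan : span ℚ (range ((fromRows B (1 : Matrix κ κ ℤ)).map ((↑) : ℤ → ℚ)).row) = ⊤ := by
    rw [fromRows_map, Matrix.map_one _ Int.cast_zero Int.cast_one]
    exact span_range_row_fromRows_one _
  obtain ⟨z, hzl, hzu⟩ := hB.fromRows_one.exists_mulVec_mem_Icc hspan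
    (l := Sum.elim (fun i => (B *ᵥ v) i / 2) 0) (u := Sum.elim (fun i => ((B *ᵥ v) i + 1) / 2) v)
    (x := x) (by
      rw [fromRows_map, fromRows_mulVec]
      rintro (i | j)
      · simp only [Function.comp_apply, Sum.elim_inl, hBx]
        rw [le_div_iff₀ two_pos]
        exact_mod_cast Int.ediv_mul_le _ two_ne_zero
      · have : (0 : ℚ) ≤ v j := by exact_mod_cast hv j
        simpa [x] using this)
    (by
      rw [fromRows_map, fromRows_mulVec]
      rintro (i | j)
      · simp only [Function.comp_apply, Sum.elim_inl, hBx]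
        rw [div_le_iff₀ two_pos]
        exact_mod_cast (by omega : (B *ᵥ v) i ≤ ((B *ᵥ v) i + 1) / 2 * 2)
      · have : (0 : ℚ) ≤ v j := by exact_mod_cast hv j
        simp [x]
        linarith)
  rw [fromRows_mulVec, one_mulVec] at hzl hzu
  exact ⟨z, fun j => hzl (Sum.inr j), fun j => hzu (Sum.inr j),
    fun i => ⟨hzl (Sum.inl i), hzu (Sum.inl i)⟩⟩

theorem IsTotallyUnimodular.exists_subset_abs_sum_sub_two_mul_sum_le_one
    (hB : B.IsTotallyUnimodular) (S : Finset κ) :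
    ∃ T ⊆ S, ∀ i, |∑ j ∈ S, B i j - 2 * ∑ j ∈ T, B i j| ≤ 1 := by
  obtain ⟨z, hz0, hzS, hBz⟩ := hB.exists_mulVec_near_half (v := fun j => if j ∈ S then 1 else 0)
    fun j => by positivity
  set T := S.filter fun j => z j = 1
  have hz : z = fun j => if j ∈ T then 1 else 0 := by
    ext j
    have h0 := hz0 j
    have h1 := hzS j
    by_cases hj : j ∈ S <;> simp_all [T] <;> omega
  refine ⟨T, Finset.filter_subset _ _, fun i => ?_⟩
  have := hBz i
  rw [hz, mulVec_ite_mem, mulVec_ite_mem] at this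
  rw [abs_le]
  omega

end IntegerPoints

end Matrix

/-- Ghouila-Houri characterization, direction (i) ⇒ (iii): if `A` is totally unimodular, then
every collection of columns of `A` can be split into two parts such that the sum of the columns
in one part minus the sum of the columns in the other part is a vector with entries in
`{-1, 0, 1}`. -/
theorem isTotallyUnimodular_imp_ghouilaHouri_split {m n : ℕ} (A : Matrix (Fin m) (Fin n) ℚ)
    (hA : A.IsTotallyUnimodular) :
    ∀ S : Finset (Fin n), ∃ S₁ S₂ : Finset (Fin n),
      Disjoint S₁ S₂ ∧ S₁ ∪ S₂ = S ∧
      ∀ i : Fin m, (∑ j ∈ S₁, A i j) - (∑ j ∈ S₂, A i j) ∈ ({-1, 0, 1} : Set ℚ) := by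
  intro S
  obtain ⟨B, hB, rfl⟩ := hA.exists_map_intCast_eq
  obtain ⟨T, hTS, hT⟩ := hB.exists_subset_abs_sum_sub_two_mul_sum_le_one S
  refine ⟨S \ T, T, Finset.sdiff_disjoint, Finset.sdiff_union_of_subset hTS, fun i => ?_⟩
  have hsplit : ∑ j ∈ S \ T, B.map ((↑) : ℤ → ℚ) i j - ∑ j ∈ T, B.map ((↑) : ℤ → ℚ) i j =
      ((∑ j ∈ S, B i j - 2 * ∑ j ∈ T, B i j : ℤ) : ℚ) := by
    rw [Finset.sum_sdiff_eq_sub hTS]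
    push_cast [map_apply]
    ring
  obtain ⟨hlo, hhi⟩ := abs_le.mp (hT i)
  rw [hsplit]
  interval_cases h : ∑ j ∈ S, B i j - 2 * ∑ j ∈ T, B i j <;> simp
end

section
/- Fix an integer n ≥ 2. Let C be the (n·(n-1)) × (n-1) matrix, with rows grouped into n consecutive blocks of n rows each and columns indexed by k ∈ {1,…,n-1}, defined as follows: every entry in the first block of n rows equals 1; for each k ∈ {1,…,n-1}, every entry of column k in the (k+1)-st block of n rows equals -1; and all other entries equal 0. Then C is totally unimodular. -/
/-!
Up to repeating rows, `C` is the all-ones row stacked on `-I`. Repeating rows preserves total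
unimodularity, a single row with entries in `{0, 1, -1}` is trivially totally unimodular, and
appending rows that are signed unit vectors preserves it (Laplace expansion along such a row).
-/

namespace Matrix

variable {m n R : Type*} [CommRing R]

lemma isTotallyUnimodular_of_subsingleton_rows [Subsingleton m] {A : Matrix m n R}
    (hA : ∀ i j, A i j ∈ Set.range SignType.cast) : A.IsTotallyUnimodular := by
  intro k f g hf _
  match k with
  | 0 => exact ⟨1, by simp⟩
  | 1 => simpa [det_fin_one] using hA (f 0) (g 0)
  | _ + 2 => exact absurd (hf (Subsingleton.elim (f 0) (f 1))) (by simp)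

lemma fromRows_neg_one_isTotallyUnimodular_iff [DecidableEq n] (A : Matrix m n R) :
    (fromRows A (-1 : Matrix n n R)).IsTotallyUnimodular ↔ A.IsTotallyUnimodular :=
  fromRows_isTotallyUnimodular_iff_rows fun _ i ↦
    ⟨i, -1, funext fun j ↦ by
      obtain rfl | h := eq_or_ne j i <;> simp [*, Ne.symm]⟩

lemma ones_fromRows_neg_one_isTotallyUnimodular [DecidableEq n] :
    (fromRows (of fun (_ : Unit) (_ : n) ↦ (1 : R)) (-1 : Matrix n n R)).IsTotallyUnimodular :=
  (fromRows_neg_one_isTotallyUnimodular_iff _).2 <|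
    isTotallyUnimodular_of_subsingleton_rows fun _ _ ↦ ⟨1, by simp⟩

end Matrix

/-- Block `0` is sent to the all-ones row, block `k + 1` to row `k` of `-I`. -/
def blockRow {m : ℕ} (b : Fin m) : Unit ⊕ Fin m :=
  if h : (b : ℕ) = 0 then .inl () else .inr ⟨b - 1, by omega⟩

theorem kmedoid_C_isTotallyUnimodular_general (n : ℕ) :
    (Matrix.of fun (br : Fin (n - 1) × Fin n) (k : Fin (n - 1)) =>
      if (br.1 : ℕ) = 0 then (1 : ℚ)
      else if (br.1 : ℕ) = (k : ℕ) + 1 then (-1 : ℚ)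
      else 0).IsTotallyUnimodular := by
  convert (Matrix.ones_fromRows_neg_one_isTotallyUnimodular (R := ℚ) (n := Fin (n - 1))).submatrix
    (fun br : Fin (n - 1) × Fin n ↦ blockRow br.1) id using 1
  ext ⟨b, _⟩ k
  rw [Matrix.submatrix_apply, Matrix.of_apply, blockRow]
  dsimp only
  split_ifs
  · rfl
  · simp [Matrix.one_apply, Fin.ext_iff]
    omega
  · simp [Matrix.one_apply, Fin.ext_iff]
    omega

/-- The matrix `C` from the proof of Theorem 4 of the paper is totally unimodular. `C` has
`n·(n-1)` rows, grouped into consecutive blocks of `n` rows each (a row is indexed by a pair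
`(b, r)` where `b` is the block and `r` the position within the block), and `n-1` columns.
Every entry of the first block equals `1`; every entry of column `k` in the `(k+1)`-st block
equals `-1`; all other entries equal `0`. -/
theorem kmedoid_C_isTotallyUnimodular (n : ℕ) (hn : 2 ≤ n) :
    (Matrix.of fun (br : Fin (n - 1) × Fin n) (k : Fin (n - 1)) =>
      if (br.1 : ℕ) = 0 then (1 : ℚ)
      else if (br.1 : ℕ) = (k : ℕ) + 1 then (-1 : ℚ)
      else 0).IsTotallyUnimodular :=
  kmedoid_C_isTotallyUnimodular_general n
end

section
/- Fix an integer n ≥ 2. Let C be the (n·(n-1)) × (n-1) matrix, with rows grouped into n consecutive blocks of n rows each and columns indexed by k ∈ {1,…,n-1}, defined as follows: every entry in the first block of n rows equals 1; for each k ∈ {1,…,n-1}, every entry of column k in the (k+1)-st block of n rows equals -1; and all other entries equal 0. Then the (n·(n-1)) × (n·(n-1) + n - 1) block matrix B = [I_{n(n-1)} C], obtained by placing the identity matrix of size n·(n-1) to the left of C, is totally unimodular. -/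
/-!
Since `B = [I C]`, it suffices that `C` is totally unimodular. Every row of `C` is either the
all-ones row (first block) or the signed unit vector `-e_{b-1}` (block `b ≥ 1`). Hence `C` is a
submatrix, with repeated rows, of the all-ones row stacked on top of all signed unit rows, and
stacking signed unit rows under a totally unimodular matrix keeps it totally unimodular
(expansion of the determinant along such a row).
-/

namespace Matrix

variable {m n R : Type*} [CommRing R]

lemma isTotallyUnimodular_of_rows_eq_or_unitlike [DecidableEq n] {A : Matrix m n R} (v : n → R)
    (hv : ∀ j, v j ∈ Set.range SignType.cast)
    (hA : ∀ i, A i = v ∨ ∃ j, ∃ s : SignType, A i = Pi.single j s.cast) :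
    A.IsTotallyUnimodular := by
  let units : Matrix (n × SignType) n R := of fun p => Pi.single p.1 p.2.cast
  have hTU : (fromRows (replicateRow Unit v) units).IsTotallyUnimodular :=
    (isTotallyUnimodular_of_subsingleton_rows fun _ j => hv j).fromRows_unitlike
      fun _ p => ⟨p.1, p.2, rfl⟩
  classical
  choose j s hjs using fun i (hi : A i ≠ v) => (hA i).resolve_left hi
  convert hTU.submatrix (fun i => if hi : A i = v then .inl () else .inr (j i hi, s i hi)) id
  ext i k
  by_cases hi : A i = v
  · simp [hi]
  · rw [submatrix_apply, dif_neg hi, hjs i hi]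
    simp [units]

end Matrix

theorem kmedoid_B_isTotallyUnimodular_general (n : ℕ) :
    (Matrix.fromCols
      (1 : Matrix (Fin (n - 1) × Fin n) (Fin (n - 1) × Fin n) ℚ)
      (Matrix.of fun (br : Fin (n - 1) × Fin n) (k : Fin (n - 1)) =>
        if (br.1 : ℕ) = 0 then (1 : ℚ)
        else if (br.1 : ℕ) = (k : ℕ) + 1 then (-1 : ℚ)
        else 0)).IsTotallyUnimodular := by
  rw [Matrix.one_fromCols_isTotallyUnimodular_iff]
  refine Matrix.isTotallyUnimodular_of_rows_eq_or_unitlike 1 (fun _ => ⟨1, by simp⟩) ?_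
  rintro ⟨b, r⟩
  by_cases hb : (b : ℕ) = 0
  · left
    ext k
    simp [hb]
  · right
    have hlt : (b : ℕ) - 1 < n - 1 := by omega
    refine ⟨⟨b - 1, hlt⟩, -1, funext fun k => ?_⟩
    have hcol : (b : ℕ) = k + 1 ↔ k = ⟨b - 1, hlt⟩ := by simp only [Fin.ext_iff]; omega
    simp [hb, hcol, Pi.single_apply]

/-- The reduced constraint matrix `B = [I_{n(n-1)} C]` of the k-medoid relief-centre location
problem is totally unimodular (core of the proof of Theorem 4 of the paper). Here `C` has
`n·(n-1)` rows, grouped into consecutive blocks of `n` rows each (a row is indexed by a pair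
`(b, r)` where `b` is the block and `r` the position within the block), and `n-1` columns:
every entry of the first block equals `1`, every entry of column `k` in the `(k+1)`-st block
equals `-1`, and all other entries equal `0`. `B` is obtained by placing the identity matrix of
size `n·(n-1)` to the left of `C`. -/
theorem kmedoid_B_isTotallyUnimodular (n : ℕ) (hn : 2 ≤ n) :
    (Matrix.fromCols
      (1 : Matrix (Fin (n - 1) × Fin n) (Fin (n - 1) × Fin n) ℚ)
      (Matrix.of fun (br : Fin (n - 1) × Fin n) (k : Fin (n - 1)) =>
        if (br.1 : ℕ) = 0 then (1 : ℚ)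
        else if (br.1 : ℕ) = (k : ℕ) + 1 then (-1 : ℚ)
        else 0)).IsTotallyUnimodular :=
  kmedoid_B_isTotallyUnimodular_general n
end
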